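/- Assume the set-valued map K satisfies (H1) and (H2), and fix R > 0. Let Ψ ∈ C_c^∞(ℝ^d × ℝ^d) and let f : ℝ^d × ℝ^d → [0,∞) be measurable with f ∈ L¹ ∩ L∞ and f(x,v) = 0 for |v| > R. Define G(f)(y,w) := ∫∫_{ℝ^d×ℝ^d} 1_{K(v)}(x − y) (∇_v Ψ(x,v) · (w − v)) f(x,v) dx dv. Then there exists a constant C' > 0, depending only on d, R, and the constants in (H1)–(H2), such that for all y, y' ∈ ℝ^d and all w, w' ∈ ℝ^d with |w|, |w'| ≤ R: |G(f)(y,w) − G(f)(y',w')| ≤ C' ‖∇_v Ψ‖_{L∞} (1 + ‖f‖_{L¹} + ‖f‖_{L∞}) (|y − y'| + |w − w'|). -/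

import Mathlib

open MeasureTheory Metric Set Pointwise
set_option maxHeartbeats 1000000
noncomputable section

abbrev E (d : ℕ) : Type := EuclideanSpace ℝ (Fin d)

/-- The vector field `G(f)(y,w) := ∫∫ 1_{K(v)}(x−y) (∇_v Ψ(x,v) · (w−v)) f(x,v) dx dv`. -/
noncomputable def Gfield {d : ℕ} (K : E d → Set (E d)) (Ψ : E d × E d → ℝ)
    (f : E d × E d → ℝ) (y w : E d) : ℝ :=
  ∫ p : E d × E d, Set.indicator (K p.2) (fun _ => (1:ℝ)) (p.1 - y) * f p *
    (inner ℝ (gradient (fun u => Ψ (p.1, u)) p.2) (w - p.2) : ℝ)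

namespace Stmt14Aux

variable {d : ℕ}


variable {d : ℕ}

lemma infDist_le_of_mem_add {S : Set (E d)} {x : E d} {r : ℝ}
    (hx : x ∈ S + closedBall 0 r) : infDist x S ≤ r := by
  obtain ⟨a, ha, b, hb, rfl⟩ := Set.mem_add.1 hx
  have hb' : ‖b‖ ≤ r := by simpa [mem_closedBall, dist_eq_norm] using hb
  calc infDist (a + b) S ≤ dist (a + b) a := infDist_le_dist_of_mem ha
    _ = ‖b‖ := by simp [dist_eq_norm]
    _ ≤ r := hb'

lemma mem_add_ball_of_infDist_le {S : Set (E d)} (hS : IsClosed S) (hne : S.Nonempty)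
    {x : E d} {r : ℝ} (h : infDist x S ≤ r) : x ∈ S + closedBall 0 r := by
  obtain ⟨z, hz, hdz⟩ := hS.exists_infDist_eq_dist hne x
  refine Set.mem_add.2 ⟨z, hz, x - z, ?_, by abel⟩
  rw [mem_closedBall, dist_zero_right, ← dist_eq_norm']
  rw [hdz] at h
  rwa [dist_comm]

lemma infDist_transfer {S T : Set (E d)} (hT : T.Nonempty) {r : ℝ}
    (h : T ⊆ S + closedBall 0 r) (x : E d) : infDist x S ≤ infDist x T + r := by
  by_contra hcon
  push_neg at hcon
  obtain ⟨z, hzT, hz⟩ := (infDist_lt_iff hT).1 (by linarith : infDist x T < infDist x S - r)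
  obtain ⟨a, ha, b, hb, hab⟩ := Set.mem_add.1 (h hzT)
  have hb' : ‖b‖ ≤ r := by simpa [mem_closedBall, dist_eq_norm] using hb
  have h1 : infDist x S ≤ dist x a := infDist_le_dist_of_mem ha
  have h2 : dist x a ≤ dist x z + ‖b‖ := by
    calc dist x a ≤ dist x z + dist z a := dist_triangle x z a
      _ = dist x z + ‖b‖ := by rw [← hab]; simp [dist_eq_norm]
  linarith



variable {d : ℕ}


lemma rho_cont {Θ : E d → Set (E d)} {C : ℝ} (hC : 0 < C)
    (hne : ∀ v, (Θ v).Nonempty)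
    (h2iv : ∀ v w, Θ w ⊆ Θ v + closedBall (0 : E d) (C * ‖v - w‖)) (y : E d) :
    Continuous fun p : E d × E d => infDist (p.1 - y) (Θ p.2) := by
  rw [Metric.continuous_iff]
  intro p ε hε
  refine ⟨ε / (1 + C), by positivity, fun q hq => ?_⟩
  rw [Prod.dist_eq, max_lt_iff] at hq
  obtain ⟨hq1, hq2⟩ := hq
  have k1 : infDist (q.1 - y) (Θ q.2) ≤ infDist (p.1 - y) (Θ q.2) + dist q.1 p.1 := by
    have := infDist_le_infDist_add_dist (x := q.1 - y) (y := p.1 - y) (s := Θ q.2)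
    simpa [dist_sub_right] using this
  have k2 : infDist (p.1 - y) (Θ q.2) ≤ infDist (p.1 - y) (Θ p.2) + C * dist q.2 p.2 := by
    have := infDist_transfer (hne p.2) (h2iv q.2 p.2) (p.1 - y)
    rwa [← dist_eq_norm] at this
  have k1' : infDist (p.1 - y) (Θ p.2) ≤ infDist (q.1 - y) (Θ p.2) + dist q.1 p.1 := by
    have := infDist_le_infDist_add_dist (x := p.1 - y) (y := q.1 - y) (s := Θ p.2)
    rw [dist_sub_right, dist_comm] at this
    exact this
  have k2' : infDist (q.1 - y) (Θ p.2) ≤ infDist (q.1 - y) (Θ q.2) + C * dist q.2 p.2 := by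
    have := infDist_transfer (hne q.2) (h2iv p.2 q.2) (q.1 - y)
    rwa [← dist_eq_norm, dist_comm] at this
  have hd2 : C * dist q.2 p.2 ≤ C * (ε / (1 + C)) := by nlinarith
  have hsum : ε / (1 + C) + C * (ε / (1 + C)) = ε := by field_simp
  rw [Real.dist_eq, abs_sub_lt_iff]
  constructor <;> nlinarith [dist_nonneg (x := q.2) (y := p.2)]

lemma exists_frontier_dist_le {S : Set (E d)} {a b : E d} (ha : a ∈ S) (hb : b ∉ S) :
    ∃ z ∈ frontier S, dist a z ≤ dist a b ∧ dist b z ≤ dist a b := by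
  by_cases hfa : a ∈ frontier S
  · exact ⟨a, hfa, by simp [dist_nonneg], by rw [dist_comm]⟩
  by_cases hfb : b ∈ frontier S
  · exact ⟨b, hfb, le_refl _, by simp [dist_nonneg]⟩
  by_contra hcon
  push_neg at hcon
  have hfr : ∀ z ∈ segment ℝ a b, z ∉ frontier S := by
    intro z hz hzf
    have h1 := dist_add_dist_of_mem_segment hz
    have h2 := hcon z hzf (by nlinarith [dist_nonneg (x := z) (y := b)])
    rw [dist_comm b z] at h2
    nlinarith [dist_nonneg (x := a) (y := z)]
  have hseg : segment ℝ a b ⊆ interior S ∪ (closure S)ᶜ := by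
    intro z hz
    by_cases hcz : z ∈ closure S
    · left
      by_contra hni
      exact hfr z hz ⟨hcz, hni⟩
    · right; exact hcz
  have hpre : IsPreconnected (segment ℝ a b) := (convex_segment a b).isPreconnected
  rcases hpre.subset_or_subset isOpen_interior (isClosed_closure.isOpen_compl)
      ((disjoint_compl_right (a := closure S)).mono_left interior_subset_closure)
      hseg with hsub | hsub
  · exact hb (interior_subset (hsub (right_mem_segment ℝ a b)))
  · exact (hsub (left_mem_segment ℝ a b)) (subset_closure ha)

lemma theta_nonempty {K Θ : E d → Set (E d)} (hd : 0 < d)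
    (hKne : ∀ v, (K v).Nonempty) (hKcp : ∀ v, IsCompact (K v))
    (h2i : ∀ v, frontier (K v) ⊆ Θ v) : ∀ v, (Θ v).Nonempty := by
  haveI : PreconnectedSpace (E d) := ⟨(convex_univ : Convex ℝ (univ : Set (E d))).isPreconnected⟩
  intro v
  rw [Set.nonempty_iff_ne_empty]
  intro hemp
  have hfr : frontier (K v) = ∅ := eq_empty_of_subset_empty (hemp ▸ h2i v)
  have hcl : IsClopen (K v) := isClopen_iff_frontier_eq_empty.2 hfr
  have huniv : K v = univ := hcl.eq_univ (hKne v)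
  have hb := (hKcp v).isBounded
  rw [huniv] at hb
  obtain ⟨r, hr⟩ := isBounded_iff_forall_norm_le.1 hb
  have h1 := hr (EuclideanSpace.single (⟨0, hd⟩ : Fin d) (|r| + 1)) (mem_univ _)
  rw [EuclideanSpace.norm_single, Real.norm_eq_abs,
    abs_of_nonneg (by positivity : (0:ℝ) ≤ |r| + 1)] at h1
  have := le_abs_self r
  linarith

lemma theta_slice_null {Θv : Set (E d)} {C : ℝ} (hC : 0 < C)
    (h : ∀ ε ∈ Set.Ioo (0:ℝ) 1, volume (Θv + closedBall (0:E d) ε) ≤ ENNReal.ofReal (C * ε)) :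
    volume Θv = 0 := by
  have key : ∀ ε ∈ Set.Ioo (0:ℝ) 1, volume Θv ≤ ENNReal.ofReal (C * ε) := by
    intro ε hε
    refine le_trans (measure_mono ?_) (h ε hε)
    intro x hx
    exact Set.mem_add.2 ⟨x, hx, 0, by simp [hε.1.le], by simp⟩
  by_contra hne
  set m := volume Θv with hm
  have hfin : m < ⊤ := lt_of_le_of_lt (key (1/2) (by norm_num)) ENNReal.ofReal_lt_top
  have hmtpos : 0 < m.toReal := ENNReal.toReal_pos hne hfin.ne
  set ε := min (1/2 : ℝ) (m.toReal / (2*C)) with hε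
  have hεIoo : ε ∈ Set.Ioo (0:ℝ) 1 :=
    ⟨lt_min (by norm_num) (by positivity), lt_of_le_of_lt (min_le_left _ _) (by norm_num)⟩
  have h1 := key ε hεIoo
  have h2 : C * ε ≤ m.toReal / 2 := by
    have hle : ε ≤ m.toReal / (2*C) := min_le_right _ _
    calc C * ε ≤ C * (m.toReal / (2*C)) := by nlinarith
      _ = m.toReal / 2 := by field_simp
  have h3 : m.toReal ≤ C * ε := by
    have := ENNReal.toReal_mono ENNReal.ofReal_ne_top h1
    rwa [ENNReal.toReal_ofReal (by positivity)] at this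
  linarith



variable {d : ℕ}


lemma mset_open {K Θ : E d → Set (E d)} {C : ℝ} (hC : 0 < C)
    (hKcl : ∀ v, IsClosed (K v))
    (h2i : ∀ v, frontier (K v) ⊆ Θ v)
    (h2iii : ∀ v w, symmDiff (K v) (K w) ⊆ Θ v + closedBall (0 : E d) (C * ‖v - w‖))
    (h2iv : ∀ v w, Θ w ⊆ Θ v + closedBall (0 : E d) (C * ‖v - w‖))
    (hne : ∀ v, (Θ v).Nonempty) (y : E d) :
    IsOpen {p : E d × E d | p.1 - y ∈ K p.2 ∧ 0 < infDist (p.1 - y) (Θ p.2)} := by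
  rw [Metric.isOpen_iff]
  rintro ⟨x, v⟩ ⟨hxK, hxd⟩
  set r := infDist (x - y) (Θ v) with hr
  have h2C : (0:ℝ) < 2 * (1 + 2*C) := by linarith
  set ε := r / (2 * (1 + 2*C)) with hε
  have hεpos : 0 < ε := by positivity
  have hεeq : ε * (2 * (1 + 2*C)) = r := div_mul_cancel₀ r h2C.ne'
  have hεr : ε < r := by nlinarith
  refine ⟨ε, hεpos, ?_⟩
  rintro ⟨x', v'⟩ hq
  rw [mem_ball, Prod.dist_eq, max_lt_iff] at hq
  obtain ⟨hd1, hd2⟩ := hq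
  simp only at hd1 hd2
  -- (i) x' - y ∈ K v
  have h1 : x' - y ∈ K v := by
    by_contra hnot
    obtain ⟨z, hzf, hza, _⟩ := exists_frontier_dist_le hxK hnot
    have hz1 : r ≤ dist (x - y) z := infDist_le_dist_of_mem (h2i v hzf)
    have hz2 : dist (x - y) (x' - y) = dist x x' := dist_sub_right x x' y
    rw [dist_comm x x'] at hz2
    linarith [hza.trans_eq hz2, hd1]
  -- lower bound
  have hlow : r - ε - C * ε ≤ infDist (x' - y) (Θ v') := by
    have t1 : infDist (x - y) (Θ v) ≤ infDist (x' - y) (Θ v) + dist x x' := by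
      have := infDist_le_infDist_add_dist (x := x - y) (y := x' - y) (s := Θ v)
      rwa [dist_sub_right] at this
    have t2 : infDist (x' - y) (Θ v) ≤ infDist (x' - y) (Θ v') + C * ‖v - v'‖ := by
      exact infDist_transfer (hne v') (h2iv v v') (x' - y)
    have t3 : ‖v - v'‖ = dist v' v := by rw [dist_comm, dist_eq_norm]
    have t4 : C * ‖v - v'‖ ≤ C * ε := by rw [t3]; nlinarith
    have t5 : dist x x' < ε := by rwa [dist_comm]
    linarith
  -- (ii) x' - y ∈ K v'
  have h2 : x' - y ∈ K v' := by
    by_contra hnot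
    have hmem : x' - y ∈ symmDiff (K v') (K v) := Set.mem_symmDiff.2 (Or.inr ⟨h1, hnot⟩)
    have hadd := h2iii v' v hmem
    have hle : infDist (x' - y) (Θ v') ≤ C * ‖v' - v‖ := infDist_le_of_mem_add hadd
    have t3 : ‖v' - v‖ = dist v' v := dist_eq_norm v' v |>.symm
    have t4 : C * ‖v' - v‖ ≤ C * ε := by rw [t3]; nlinarith
    nlinarith
  exact ⟨h2, by nlinarith⟩

lemma nset_null {Θ : E d → Set (E d)} {C : ℝ} (hC : 0 < C) (hΘcl : ∀ v, IsClosed (Θ v))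
    (hne : ∀ v, (Θ v).Nonempty)
    (h2ii : ∀ v, ∀ ε ∈ Set.Ioo (0:ℝ) 1,
      volume (Θ v + closedBall (0 : E d) ε) ≤ ENNReal.ofReal (C * ε))
    (h2iv : ∀ v w, Θ w ⊆ Θ v + closedBall (0 : E d) (C * ‖v - w‖)) (y : E d) :
    volume {p : E d × E d | p.1 - y ∈ Θ p.2} = 0 := by
  have hcont := rho_cont hC hne h2iv y
  have hset : {p : E d × E d | p.1 - y ∈ Θ p.2}
      = (fun p : E d × E d => infDist (p.1 - y) (Θ p.2)) ⁻¹' {0} := by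
    ext p
    simp only [mem_setOf_eq, mem_preimage, mem_singleton_iff]
    exact (hΘcl p.2).mem_iff_infDist_zero (hne p.2)
  have hms : MeasurableSet {p : E d × E d | p.1 - y ∈ Θ p.2} := by
    rw [hset]
    exact hcont.measurable (measurableSet_singleton 0)
  have hprod : volume {p : E d × E d | p.1 - y ∈ Θ p.2}
      = ∫⁻ v, volume ((fun x : E d => (x, v)) ⁻¹' {p : E d × E d | p.1 - y ∈ Θ p.2}) ∂volume :=
    Measure.prod_apply_symm (μ := (volume : Measure (E d))) (ν := (volume : Measure (E d))) hms
  rw [hprod]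
  have hslice : ∀ v : E d,
      volume ((fun x : E d => (x, v)) ⁻¹' {p : E d × E d | p.1 - y ∈ Θ p.2}) = 0 := by
    intro v
    have : ((fun x : E d => (x, v)) ⁻¹' {p : E d × E d | p.1 - y ∈ Θ p.2})
        = (fun x : E d => x + (-y)) ⁻¹' (Θ v) := by
      ext x; simp [sub_eq_add_neg]
    rw [this, measure_preimage_add_right]
    exact theta_slice_null hC (h2ii v)
  calc (∫⁻ v, volume ((fun x : E d => (x, v)) ⁻¹' {p : E d × E d | p.1 - y ∈ Θ p.2}) ∂volume)
      = ∫⁻ _, 0 ∂(volume : Measure (E d)) := by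
        congr 1; funext v; exact hslice v
    _ = 0 := lintegral_zero

lemma T_vol_bound {Θ : E d → Set (E d)} {C : ℝ} (hC : 0 < C) (hΘcl : ∀ v, IsClosed (Θ v))
    (hne : ∀ v, (Θ v).Nonempty)
    (h2ii : ∀ v, ∀ ε ∈ Set.Ioo (0:ℝ) 1,
      volume (Θ v + closedBall (0 : E d) ε) ≤ ENNReal.ofReal (C * ε))
    (h2iv : ∀ v w, Θ w ⊆ Θ v + closedBall (0 : E d) (C * ‖v - w‖))
    (y : E d) {δ R : ℝ} (hδ : δ ∈ Set.Ioo (0:ℝ) 1) (hR : 0 < R) :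
    volume {p : E d × E d | infDist (p.1 - y) (Θ p.2) ≤ δ ∧ ‖p.2‖ ≤ R}
      ≤ volume (closedBall (0:E d) R) * ENNReal.ofReal (C * δ) := by
  have hcont := rho_cont hC hne h2iv y
  have hms : MeasurableSet {p : E d × E d | infDist (p.1 - y) (Θ p.2) ≤ δ ∧ ‖p.2‖ ≤ R} := by
    have h1 : MeasurableSet {p : E d × E d | infDist (p.1 - y) (Θ p.2) ≤ δ} :=
      hcont.measurable measurableSet_Iic
    have h2 : MeasurableSet {p : E d × E d | ‖p.2‖ ≤ R} :=
      (continuous_snd.norm.measurable) measurableSet_Iic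
    exact h1.inter h2
  have hprod : volume {p : E d × E d | infDist (p.1 - y) (Θ p.2) ≤ δ ∧ ‖p.2‖ ≤ R}
      = ∫⁻ v, volume ((fun x : E d => (x, v)) ⁻¹'
          {p : E d × E d | infDist (p.1 - y) (Θ p.2) ≤ δ ∧ ‖p.2‖ ≤ R}) ∂volume :=
    Measure.prod_apply_symm (μ := (volume : Measure (E d))) (ν := (volume : Measure (E d))) hms
  rw [hprod]
  have hslice : ∀ v : E d,
      volume ((fun x : E d => (x, v)) ⁻¹'
          {p : E d × E d | infDist (p.1 - y) (Θ p.2) ≤ δ ∧ ‖p.2‖ ≤ R})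
        ≤ (closedBall (0:E d) R).indicator (fun _ => ENNReal.ofReal (C * δ)) v := by
    intro v
    by_cases hv : ‖v‖ ≤ R
    · rw [Set.indicator_of_mem (mem_closedBall_zero_iff.2 hv)]
      have hsub : ((fun x : E d => (x, v)) ⁻¹'
            {p : E d × E d | infDist (p.1 - y) (Θ p.2) ≤ δ ∧ ‖p.2‖ ≤ R})
          ⊆ (fun x : E d => x + (-y)) ⁻¹' (Θ v + closedBall (0:E d) δ) := by
        intro x hx
        have := hx.1
        simp only [mem_preimage]
        have hmem : x - y ∈ Θ v + closedBall (0:E d) δ :=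
          mem_add_ball_of_infDist_le (hΘcl v) (hne v) this
        simpa [sub_eq_add_neg] using hmem
      calc volume _ ≤ volume ((fun x : E d => x + (-y)) ⁻¹' (Θ v + closedBall (0:E d) δ)) :=
            measure_mono hsub
        _ = volume (Θ v + closedBall (0:E d) δ) := measure_preimage_add_right _ _ _
        _ ≤ ENNReal.ofReal (C * δ) := h2ii v δ hδ
    · rw [Set.indicator_of_notMem (fun h => hv (mem_closedBall_zero_iff.1 h))]
      have : ((fun x : E d => (x, v)) ⁻¹'
          {p : E d × E d | infDist (p.1 - y) (Θ p.2) ≤ δ ∧ ‖p.2‖ ≤ R}) = ∅ := by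
        ext x; simp only [mem_preimage, mem_setOf_eq, Set.mem_empty_iff_false, iff_false]
        exact fun h => hv h.2
      simp [this]
  calc (∫⁻ v, volume ((fun x : E d => (x, v)) ⁻¹'
          {p : E d × E d | infDist (p.1 - y) (Θ p.2) ≤ δ ∧ ‖p.2‖ ≤ R}) ∂volume)
      ≤ ∫⁻ v, (closedBall (0:E d) R).indicator (fun _ => ENNReal.ofReal (C * δ)) v ∂volume :=
        lintegral_mono hslice
    _ = ENNReal.ofReal (C * δ) * volume (closedBall (0:E d) R) :=
        lintegral_indicator_const measurableSet_closedBall _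
    _ = volume (closedBall (0:E d) R) * ENNReal.ofReal (C * δ) := mul_comm _ _



variable {d : ℕ}

lemma gradv_eq {Ψ : E d × E d → ℝ} (hΨ : ContDiff ℝ (⊤ : ℕ∞) Ψ) (p : E d × E d) :
    gradient (fun u => Ψ (p.1, u)) p.2
      = (InnerProductSpace.toDual ℝ (E d)).symm
          ((fderiv ℝ Ψ p).comp (ContinuousLinearMap.inr ℝ (E d) (E d))) := by
  have h2 : HasFDerivAt Ψ (fderiv ℝ Ψ p) (p.1, p.2) := by
    rw [Prod.mk.eta]
    exact (hΨ.differentiable (by simp) p).hasFDerivAt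
  have h3 := hasFDerivAt_prodMk_right (𝕜 := ℝ) p.1 p.2
  have h4 : HasFDerivAt (fun u : E d => Ψ (p.1, u))
      ((fderiv ℝ Ψ p).comp (ContinuousLinearMap.inr ℝ (E d) (E d))) p.2 := h2.comp p.2 h3
  exact h4.hasGradientAt.gradient

lemma gradv_cont {Ψ : E d × E d → ℝ} (hΨ : ContDiff ℝ (⊤ : ℕ∞) Ψ) :
    Continuous fun p : E d × E d => gradient (fun u => Ψ (p.1, u)) p.2 := by
  have h1 : Continuous fun p : E d × E d =>
      (fderiv ℝ Ψ p).comp (ContinuousLinearMap.inr ℝ (E d) (E d)) :=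
    (hΨ.continuous_fderiv (by simp)).clm_comp continuous_const
  have h2 : Continuous fun p : E d × E d =>
      (InnerProductSpace.toDual ℝ (E d)).symm
        ((fderiv ℝ Ψ p).comp (ContinuousLinearMap.inr ℝ (E d) (E d))) :=
    (InnerProductSpace.toDual ℝ (E d)).symm.continuous.comp h1
  exact h2.congr fun p => (gradv_eq hΨ p).symm



variable {d : ℕ}


lemma F_aemeas {K Θ : E d → Set (E d)} {C : ℝ} (hC : 0 < C)
    (hKcl : ∀ v, IsClosed (K v)) (hΘcl : ∀ v, IsClosed (Θ v))
    (hne : ∀ v, (Θ v).Nonempty)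
    (h2i : ∀ v, frontier (K v) ⊆ Θ v)
    (h2ii : ∀ v, ∀ ε ∈ Set.Ioo (0:ℝ) 1,
      volume (Θ v + closedBall (0 : E d) ε) ≤ ENNReal.ofReal (C * ε))
    (h2iii : ∀ v w, symmDiff (K v) (K w) ⊆ Θ v + closedBall (0 : E d) (C * ‖v - w‖))
    (h2iv : ∀ v w, Θ w ⊆ Θ v + closedBall (0 : E d) (C * ‖v - w‖)) (y : E d) :
    AEStronglyMeasurable
      (fun p : E d × E d => Set.indicator (K p.2) (fun _ => (1:ℝ)) (p.1 - y)) volume := by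
  set Ms := {p : E d × E d | p.1 - y ∈ K p.2 ∧ 0 < infDist (p.1 - y) (Θ p.2)} with hMs
  have hMo := mset_open hC hKcl h2i h2iii h2iv hne y
  have hNnull := nset_null hC hΘcl hne h2ii h2iv y
  have h1 : AEStronglyMeasurable (Set.indicator Ms (fun _ => (1:ℝ))) volume :=
    (measurable_const.indicator hMo.measurableSet).aestronglyMeasurable
  refine h1.congr ?_
  have hsub : {p : E d × E d | ¬ (Set.indicator Ms (fun _ => (1:ℝ)) p
      = Set.indicator (K p.2) (fun _ => (1:ℝ)) (p.1 - y))} ⊆ {p : E d × E d | p.1 - y ∈ Θ p.2} := by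
    intro p hp
    simp only [mem_setOf_eq] at hp ⊢
    by_contra hpN
    apply hp
    by_cases hmem : p.1 - y ∈ K p.2
    · have hpos : 0 < infDist (p.1 - y) (Θ p.2) := by
        rcases lt_or_eq_of_le (infDist_nonneg (x := p.1 - y) (s := Θ p.2)) with h | h
        · exact h
        · exact absurd (((hΘcl p.2).mem_iff_infDist_zero (hne p.2)).2 h.symm) hpN
      have hpM : p ∈ Ms := ⟨hmem, hpos⟩
      rw [Set.indicator_of_mem hpM, Set.indicator_of_mem hmem]
    · have hpM : p ∉ Ms := fun h => hmem h.1
      rw [Set.indicator_of_notMem hpM, Set.indicator_of_notMem hmem]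
  exact (MeasureTheory.ae_iff).2 (measure_mono_null hsub hNnull)


end Stmt14Aux

/-- Under (H1)–(H2) and for fixed `R > 0`, there is `C' > 0`,
depending only on `d`, `R` and the constants in (H1)–(H2), such that for every
`Ψ ∈ C_c^∞(ℝ^d × ℝ^d)` and every nonnegative `f ∈ L¹ ∩ L∞` vanishing for `|v| > R`,
with `M` an upper bound of `‖∇_v Ψ‖_∞` and `Mf` an (a.e.) upper bound of `f`:
`|G(f)(y,w) − G(f)(y',w')| ≤ C' M (1 + ‖f‖_{L¹} + Mf)(|y−y'| + |w−w'|)`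
for all `y, y'` and all `|w|, |w'| ≤ R`. -/
theorem stmt14 {d : ℕ} (K Θ : E d → Set (E d)) (𝒦 : Set (E d)) (C : ℝ)
    (hKne : ∀ v, (K v).Nonempty) (hKcp : ∀ v, IsCompact (K v))
    (h𝒦 : IsCompact 𝒦) (hKsub : ∀ v, K v ⊆ 𝒦)
    (hΘcl : ∀ v, IsClosed (Θ v)) (hC : 0 < C)
    (h2i : ∀ v, frontier (K v) ⊆ Θ v)
    (h2ii : ∀ v, ∀ ε ∈ Set.Ioo (0:ℝ) 1,
      volume (Θ v + closedBall (0 : E d) ε) ≤ ENNReal.ofReal (C * ε))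
    (h2iii : ∀ v w, symmDiff (K v) (K w) ⊆ Θ v + closedBall (0 : E d) (C * ‖v - w‖))
    (h2iv : ∀ v w, Θ w ⊆ Θ v + closedBall (0 : E d) (C * ‖v - w‖))
    (R : ℝ) (hR : 0 < R) :
    ∃ C' > 0, ∀ Ψ : E d × E d → ℝ, ContDiff ℝ (⊤ : ℕ∞) Ψ → HasCompactSupport Ψ →
      ∀ f : E d × E d → ℝ, Measurable f → (∀ z, 0 ≤ f z) → Integrable f volume →
      (∀ z : E d × E d, R < ‖z.2‖ → f z = 0) →
      ∀ M Mf : ℝ,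
        (∀ x v : E d, ‖gradient (fun u => Ψ (x, u)) v‖ ≤ M) →
        (∀ᵐ z : E d × E d ∂volume, f z ≤ Mf) →
        ∀ y y' w w' : E d, ‖w‖ ≤ R → ‖w'‖ ≤ R →
          |Gfield K Ψ f y w - Gfield K Ψ f y' w'| ≤
            C' * M * (1 + (∫ z, f z) + Mf) * (‖y - y'‖ + ‖w - w'‖) := by
  rcases Nat.eq_zero_or_pos d with hd0 | hd
  · subst hd0
    haveI hsub : Subsingleton (E 0) := ⟨fun a b => PiLp.ext fun i => i.elim0⟩
    refine ⟨1, one_pos, ?_⟩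
    intro Ψ hΨ hΨc f hfm hf0 hfi hfR M Mf hM hMf y y' w w' hw hw'
    have hy : y = y' := Subsingleton.elim _ _
    have hww : w = w' := Subsingleton.elim _ _
    subst hy; subst hww
    rw [sub_self, abs_zero, sub_self y, sub_self w, norm_zero]
    norm_num
  haveI : PreconnectedSpace (E d) :=
    ⟨(convex_univ : Convex ℝ (univ : Set (E d))).isPreconnected⟩
  have hKcl : ∀ v, IsClosed (K v) := fun v => (hKcp v).isClosed
  have hΘne : ∀ v, (Θ v).Nonempty := Stmt14Aux.theta_nonempty hd hKne hKcp h2i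
  set B := (volume (closedBall (0:E d) R)).toReal with hB
  have hBnn : 0 ≤ B := ENNReal.toReal_nonneg
  have hC'pos : 0 < 2*R*B*C + 4*R + 1 := by
    nlinarith [mul_nonneg (mul_nonneg (by linarith : (0:ℝ) ≤ 2*R) hBnn) hC.le]
  refine ⟨2*R*B*C + 4*R + 1, hC'pos, ?_⟩
  intro Ψ hΨ hΨc f hfm hf0 hfi hfR M Mf hM hMf y y' w w' hw hw'
  have hM0 : 0 ≤ M := le_trans (norm_nonneg _) (hM 0 0)
  have hvol_ne : (volume : Measure (E d × E d)) ≠ 0 := by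
    intro h0
    have h1 : (volume : Measure (E d × E d)) univ = 0 := by rw [h0]; rfl
    have h2 : (volume : Measure (E d × E d)) univ
        = volume (univ : Set (E d)) * volume (univ : Set (E d)) := by
      rw [← univ_prod_univ]
      exact Measure.prod_prod _ _
    have hu : volume (univ : Set (E d)) ≠ 0 :=
      (isOpen_univ.measure_ne_zero (μ := (volume : Measure (E d))) univ_nonempty)
    rw [h2] at h1
    exact (mul_ne_zero hu hu) h1
  haveI : (MeasureTheory.ae (volume : Measure (E d × E d))).NeBot := ae_neBot.2 hvol_ne
  have hMf0 : 0 ≤ Mf := by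
    obtain ⟨z, hz⟩ := hMf.exists
    exact le_trans (hf0 z) hz
  set I := ∫ z, f z with hI
  have hInn : 0 ≤ I := integral_nonneg hf0
  have hFmeas : ∀ y₀ : E d, AEStronglyMeasurable
      (fun p : E d × E d => Set.indicator (K p.2) (fun _ => (1:ℝ)) (p.1 - y₀)) volume :=
    fun y₀ => Stmt14Aux.F_aemeas hC hKcl hΘcl hΘne h2i h2ii h2iii h2iv y₀
  have hgradc : Continuous fun p : E d × E d => gradient (fun u => Ψ (p.1, u)) p.2 :=
    Stmt14Aux.gradv_cont hΨ
  have hhc : ∀ w₀ : E d, Continuous fun p : E d × E d =>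
      (inner ℝ (gradient (fun u => Ψ (p.1, u)) p.2) (w₀ - p.2) : ℝ) :=
    fun w₀ => hgradc.inner (continuous_const.sub continuous_snd)
  set g : E d → E d → (E d × E d) → ℝ := fun y₀ w₀ p =>
    Set.indicator (K p.2) (fun _ => (1:ℝ)) (p.1 - y₀) * f p *
      (inner ℝ (gradient (fun u => Ψ (p.1, u)) p.2) (w₀ - p.2) : ℝ) with hg
  have hGeq : ∀ y₀ w₀ : E d, Gfield K Ψ f y₀ w₀ = ∫ p, g y₀ w₀ p := fun _ _ => rfl
  have hFle : ∀ (y₀ : E d) (p : E d × E d),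
      |Set.indicator (K p.2) (fun _ => (1:ℝ)) (p.1 - y₀)| ≤ 1 := by
    intro y₀ p
    by_cases h : p.1 - y₀ ∈ K p.2 <;> simp [h]
  have hfv : ∀ p : E d × E d, f p ≠ 0 → ‖p.2‖ ≤ R :=
    fun p hfp => le_of_not_gt fun h => hfp (hfR p h)
  have hinner_le : ∀ (w₀ : E d) (p : E d × E d), ‖w₀‖ ≤ R → ‖p.2‖ ≤ R →
      |(inner ℝ (gradient (fun u => Ψ (p.1, u)) p.2) (w₀ - p.2) : ℝ)| ≤ 2*R*M := by
    intro w₀ p hw₀ hp2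
    calc |(inner ℝ (gradient (fun u => Ψ (p.1, u)) p.2) (w₀ - p.2) : ℝ)|
        ≤ ‖gradient (fun u => Ψ (p.1, u)) p.2‖ * ‖w₀ - p.2‖ := abs_real_inner_le_norm _ _
      _ ≤ M * (2*R) := by
          apply mul_le_mul (hM p.1 p.2) ?_ (norm_nonneg _) hM0
          calc ‖w₀ - p.2‖ ≤ ‖w₀‖ + ‖p.2‖ := norm_sub_le _ _
            _ ≤ 2*R := by linarith
      _ = 2*R*M := by ring
  have habs : ∀ (y₀ w₀ : E d) (p : E d × E d), ‖w₀‖ ≤ R → |g y₀ w₀ p| ≤ (2*R*M) * f p := by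
    intro y₀ w₀ p hw₀
    by_cases hfp : f p = 0
    · simp [hg, hfp]
    · rw [hg]
      simp only
      rw [abs_mul, abs_mul, abs_of_nonneg (hf0 p)]
      have h2 : |Set.indicator (K p.2) (fun _ => (1:ℝ)) (p.1 - y₀)| * f p ≤ 1 * f p :=
        mul_le_mul_of_nonneg_right (hFle y₀ p) (hf0 p)
      calc |Set.indicator (K p.2) (fun _ => (1:ℝ)) (p.1 - y₀)| * f p *
            |(inner ℝ (gradient (fun u => Ψ (p.1, u)) p.2) (w₀ - p.2) : ℝ)|
          ≤ 1 * f p * (2*R*M) :=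
            mul_le_mul h2 (hinner_le w₀ p hw₀ (hfv p hfp)) (abs_nonneg _)
              (by simpa using hf0 p)
        _ = 2*R*M * f p := by ring
  have hginteg : ∀ y₀ w₀ : E d, ‖w₀‖ ≤ R → Integrable (g y₀ w₀) volume := by
    intro y₀ w₀ hw₀
    refine Integrable.mono' (hfi.const_mul (2*R*M)) ?_ ?_
    · exact ((hFmeas y₀).mul hfm.aestronglyMeasurable).mul (hhc w₀).aestronglyMeasurable
    · exact Filter.Eventually.of_forall fun p => by
        simpa [Real.norm_eq_abs] using habs y₀ w₀ p hw₀
  have hsplit : Gfield K Ψ f y w - Gfield K Ψ f y' w'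
      = (∫ p, (g y w p - g y' w p)) + (∫ p, (g y' w p - g y' w' p)) := by
    rw [hGeq y w, hGeq y' w',
      integral_sub (hginteg y w hw) (hginteg y' w hw),
      integral_sub (hginteg y' w hw) (hginteg y' w' hw')]
    ring
  -- second term
  have hterm2 : |∫ p, (g y' w p - g y' w' p)| ≤ M * I * ‖w - w'‖ := by
    have hpt : ∀ p : E d × E d, |g y' w p - g y' w' p| ≤ (M * ‖w - w'‖) * f p := by
      intro p
      have hdiff : g y' w p - g y' w' p
          = Set.indicator (K p.2) (fun _ => (1:ℝ)) (p.1 - y') * f p *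
            (inner ℝ (gradient (fun u => Ψ (p.1, u)) p.2) (w - w') : ℝ) := by
        rw [hg]
        simp only
        rw [← mul_sub]
        congr 1
        rw [← inner_sub_right]
        congr 1
        abel
      rw [hdiff, abs_mul, abs_mul, abs_of_nonneg (hf0 p)]
      have h1 : |(inner ℝ (gradient (fun u => Ψ (p.1, u)) p.2) (w - w') : ℝ)| ≤ M * ‖w - w'‖ :=
        le_trans (abs_real_inner_le_norm _ _)
          (mul_le_mul_of_nonneg_right (hM p.1 p.2) (norm_nonneg _))
      have h2 : |Set.indicator (K p.2) (fun _ => (1:ℝ)) (p.1 - y')| * f p ≤ 1 * f p :=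
        mul_le_mul_of_nonneg_right (hFle y' p) (hf0 p)
      calc |Set.indicator (K p.2) (fun _ => (1:ℝ)) (p.1 - y')| * f p *
            |(inner ℝ (gradient (fun u => Ψ (p.1, u)) p.2) (w - w') : ℝ)|
          ≤ 1 * f p * (M * ‖w - w'‖) :=
            mul_le_mul h2 h1 (abs_nonneg _) (by simpa using hf0 p)
        _ = (M * ‖w - w'‖) * f p := by ring
    have hint1 : Integrable (fun p => |g y' w p - g y' w' p|) volume :=
      ((hginteg y' w hw).sub (hginteg y' w' hw')).abs
    calc |∫ p, (g y' w p - g y' w' p)| ≤ ∫ p, |g y' w p - g y' w' p| := by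
          simpa [Real.norm_eq_abs] using
            norm_integral_le_integral_norm (μ := volume) (fun p => g y' w p - g y' w' p)
      _ ≤ ∫ p, (M * ‖w - w'‖) * f p :=
          integral_mono hint1 (hfi.const_mul _) hpt
      _ = (M * ‖w - w'‖) * I := by rw [integral_const_mul]
      _ = M * I * ‖w - w'‖ := by ring
  set δ := ‖y - y'‖ with hδdef
  have hδnn : 0 ≤ δ := norm_nonneg _
  have hterm1 : |∫ p, (g y w p - g y' w p)| ≤ (2*R*M*Mf*B*C + 4*R*M*I) * δ := by
    rcases eq_or_lt_of_le hδnn with hδ0 | hδpos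
    · have hyy : y = y' := by
        have h0 : ‖y - y'‖ = 0 := hδ0.symm
        rwa [norm_sub_eq_zero_iff] at h0
      rw [hyy, ← hδ0]
      simp
    rcases lt_or_ge δ 1 with hδ1 | hδ1
    · -- 0 < δ < 1
      set T := {p : E d × E d | infDist (p.1 - y) (Θ p.2) ≤ δ ∧ ‖p.2‖ ≤ R} with hT
      have hTmeas : MeasurableSet T := by
        have h1 : MeasurableSet {p : E d × E d | infDist (p.1 - y) (Θ p.2) ≤ δ} :=
          (Stmt14Aux.rho_cont hC hΘne h2iv y).measurable measurableSet_Iic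
        exact h1.inter ((continuous_snd.norm.measurable) measurableSet_Iic)
      have hTvol := Stmt14Aux.T_vol_bound hC hΘcl hΘne h2ii h2iv y ⟨hδpos, hδ1⟩ hR
      have hTfin : volume T ≠ ⊤ :=
        (lt_of_le_of_lt hTvol
          (ENNReal.mul_lt_top measure_closedBall_lt_top ENNReal.ofReal_lt_top)).ne
      have hpt : ∀ᵐ p : E d × E d ∂volume,
          |g y w p - g y' w p| ≤ T.indicator (fun _ => 2*R*M*Mf) p := by
        filter_upwards [hMf] with p hfMp
        have hRHSnn : 0 ≤ T.indicator (fun _ => (2*R*M*Mf : ℝ)) p :=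
          Set.indicator_nonneg (fun _ _ => by positivity) p
        by_cases hfp : f p = 0
        · simpa [hg, hfp] using hRHSnn
        have hv : ‖p.2‖ ≤ R := hfv p hfp
        have hfMp' : f p ≤ Mf := hfMp
        have hbound : f p * |(inner ℝ (gradient (fun u => Ψ (p.1, u)) p.2) (w - p.2) : ℝ)|
            ≤ 2*R*M*Mf := by
          calc f p * |(inner ℝ (gradient (fun u => Ψ (p.1, u)) p.2) (w - p.2) : ℝ)|
              ≤ Mf * (2*R*M) :=
                mul_le_mul hfMp' (hinner_le w p hw hv) (abs_nonneg _)
                  (le_trans (hf0 p) hfMp')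
            _ = 2*R*M*Mf := by ring
        have hdd : dist (p.1 - y) (p.1 - y') = δ := by
          have harr : (p.1 - y) - (p.1 - y') = y' - y := by abel
          rw [dist_eq_norm, harr, norm_sub_rev]
        by_cases h1 : p.1 - y ∈ K p.2 <;> by_cases h2 : p.1 - y' ∈ K p.2
        · simpa [hg, Set.indicator_of_mem h1, Set.indicator_of_mem h2, sub_self]
            using hRHSnn
        · have hpT : p ∈ T := by
            refine ⟨?_, hv⟩
            obtain ⟨z, hzf, hza, _⟩ := Stmt14Aux.exists_frontier_dist_le h1 h2
            have hzd : infDist (p.1 - y) (Θ p.2) ≤ dist (p.1 - y) z :=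
              infDist_le_dist_of_mem (h2i p.2 hzf)
            rw [hdd] at hza
            exact le_trans hzd hza
          rw [Set.indicator_of_mem hpT, hg]
          simp only [Set.indicator_of_mem h1, Set.indicator_of_notMem h2, one_mul,
            zero_mul, sub_zero]
          rw [abs_mul, abs_of_nonneg (hf0 p)]
          exact hbound
        · have hpT : p ∈ T := by
            refine ⟨?_, hv⟩
            obtain ⟨z, hzf, _, hzb⟩ := Stmt14Aux.exists_frontier_dist_le h2 h1
            have hzd : infDist (p.1 - y) (Θ p.2) ≤ dist (p.1 - y) z :=
              infDist_le_dist_of_mem (h2i p.2 hzf)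
            rw [dist_comm (p.1 - y') (p.1 - y), hdd] at hzb
            exact le_trans hzd hzb
          rw [Set.indicator_of_mem hpT, hg]
          simp only [Set.indicator_of_mem h2, Set.indicator_of_notMem h1, one_mul,
            zero_mul, zero_sub, abs_neg]
          rw [abs_mul, abs_of_nonneg (hf0 p)]
          exact hbound
        · simpa [hg, Set.indicator_of_notMem h1, Set.indicator_of_notMem h2, sub_self]
            using hRHSnn
      have hind_int : Integrable (T.indicator (fun _ => (2*R*M*Mf : ℝ))) volume := by
        rw [integrable_indicator_iff hTmeas]
        exact integrableOn_const hTfin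
      have habs_int : Integrable (fun p => |g y w p - g y' w p|) volume :=
        ((hginteg y w hw).sub (hginteg y' w hw)).abs
      have hvolT : (volume T).toReal ≤ B * (C * δ) := by
        have h1 := ENNReal.toReal_mono
          (ENNReal.mul_ne_top measure_closedBall_lt_top.ne ENNReal.ofReal_ne_top) hTvol
        rwa [ENNReal.toReal_mul, ENNReal.toReal_ofReal (by positivity)] at h1
      calc |∫ p, (g y w p - g y' w p)| ≤ ∫ p, |g y w p - g y' w p| := by
            simpa [Real.norm_eq_abs] using
              norm_integral_le_integral_norm (μ := volume) (fun p => g y w p - g y' w p)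
        _ ≤ ∫ p, T.indicator (fun _ => (2*R*M*Mf : ℝ)) p :=
            integral_mono_ae habs_int hind_int hpt
        _ = (volume T).toReal * (2*R*M*Mf) := by
            rw [integral_indicator_const _ hTmeas, smul_eq_mul, measureReal_def]
        _ ≤ (B * (C * δ)) * (2*R*M*Mf) :=
            mul_le_mul_of_nonneg_right hvolT (by positivity)
        _ ≤ (2*R*M*Mf*B*C + 4*R*M*I) * δ := by nlinarith [mul_nonneg (mul_nonneg (mul_nonneg hR.le hM0) hInn) hδnn]
    · -- δ ≥ 1
      have hpt : ∀ p : E d × E d, |g y w p - g y' w p| ≤ (4*R*M) * f p := by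
        intro p
        have h1 := habs y w p hw
        have h2 := habs y' w p hw
        calc |g y w p - g y' w p| ≤ |g y w p| + |g y' w p| := abs_sub _ _
          _ ≤ (4*R*M) * f p := by linarith
      have habs_int : Integrable (fun p => |g y w p - g y' w p|) volume :=
        ((hginteg y w hw).sub (hginteg y' w hw)).abs
      calc |∫ p, (g y w p - g y' w p)| ≤ ∫ p, |g y w p - g y' w p| := by
            simpa [Real.norm_eq_abs] using
              norm_integral_le_integral_norm (μ := volume) (fun p => g y w p - g y' w p)
        _ ≤ ∫ p, (4*R*M) * f p := integral_mono habs_int (hfi.const_mul _) hpt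
        _ = (4*R*M) * I := by rw [integral_const_mul]
        _ ≤ (2*R*M*Mf*B*C + 4*R*M*I) * δ := by
            nlinarith [mul_nonneg (mul_nonneg (mul_nonneg (mul_nonneg
              (mul_nonneg hR.le hM0) hMf0) hBnn) hC.le) hδnn,
              mul_nonneg (mul_nonneg hR.le hM0) hInn]
  -- combine
  have hws : 0 ≤ ‖w - w'‖ := norm_nonneg _
  have hmain : |Gfield K Ψ f y w - Gfield K Ψ f y' w'|
      ≤ (2*R*M*Mf*B*C + 4*R*M*I) * δ + M * I * ‖w - w'‖ := by
    rw [hsplit]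
    exact le_trans (abs_add_le _ _) (add_le_add hterm1 hterm2)
  have e1 : (2*R*M*Mf*B*C + 4*R*M*I) ≤ (2*R*B*C + 4*R + 1) * M * (1 + I + Mf) := by
    nlinarith [mul_nonneg (mul_nonneg (mul_nonneg hR.le hBnn) hC.le)
        (mul_nonneg hM0 (by linarith : (0:ℝ) ≤ 1 + I)),
      mul_nonneg hR.le (mul_nonneg hM0 (by linarith : (0:ℝ) ≤ 1 + Mf)),
      mul_nonneg hM0 (by linarith : (0:ℝ) ≤ 1 + I + Mf)]
  have e2 : M * I ≤ (2*R*B*C + 4*R + 1) * M * (1 + I + Mf) := by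
    nlinarith [mul_nonneg (mul_nonneg (mul_nonneg (mul_nonneg hR.le hBnn) hC.le) hM0)
        (by linarith : (0:ℝ) ≤ 1 + I + Mf),
      mul_nonneg (mul_nonneg hR.le hM0) (by linarith : (0:ℝ) ≤ 1 + I + Mf),
      mul_nonneg hM0 (by linarith : (0:ℝ) ≤ 1 + Mf)]
  calc |Gfield K Ψ f y w - Gfield K Ψ f y' w'|
      ≤ (2*R*M*Mf*B*C + 4*R*M*I) * δ + M * I * ‖w - w'‖ := hmain
    _ ≤ ((2*R*B*C + 4*R + 1) * M * (1 + I + Mf)) * δ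
        + ((2*R*B*C + 4*R + 1) * M * (1 + I + Mf)) * ‖w - w'‖ :=
        add_le_add (mul_le_mul_of_nonneg_right e1 hδnn)
          (mul_le_mul_of_nonneg_right e2 hws)
    _ = (2*R*B*C + 4*R + 1) * M * (1 + I + Mf) * (δ + ‖w - w'‖) := by ring
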